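/- arXiv:2503.10561 — 4 statements merged into one kernel-verified Lean document; each statement's English description precedes it below -/
import Mathlib

section
/- Let f : X → ℝ and g : X → ℝ^m on a nonempty set X, with dual function d(λ) = sup_{z ∈ X} (f(z) + ⟨λ, g(z)⟩) for λ ∈ ℝ^m with nonnegative coordinates. Suppose there exists z† ∈ X and C ∈ ℝ^m with all coordinates strictly positive such that g(z†) ≥ C coordinatewise (Slater condition), and suppose f(z†) and d(λ⁺) are finite for a fixed reference λ⁺ ≥ 0. Then for any ε > 0, the set D = {λ ∈ ℝ^m : λ ≥ 0, d(λ) - d(λ⁺) ≤ ε} is bounded: every λ ∈ D satisfies ‖λ‖₁ ≤ (ε + d(λ⁺) - f(z†)) / min_j C_j. -/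
open Finset

/-- Boundedness of the dual sublevel set under the Slater condition: every
nonnegative `λ` with `d(λ) - d(λ⁺) ≤ ε` has `ℓ¹`-norm at most
`(ε + d(λ⁺) - f(z†)) / min_j C_j`. Here `d` is the dual function, expressed
through its lower-bound (supremum) property `hlb`. -/
theorem dual_sublevel_bounded {X : Type*} [Nonempty X] {m : ℕ} (hm : 0 < m)
    (f : X → ℝ) (g : X → Fin m → ℝ) (d : (Fin m → ℝ) → ℝ)
    (hlb : ∀ lam : Fin m → ℝ, (∀ j, 0 ≤ lam j) → ∀ z : X,
      f z + ∑ j, lam j * g z j ≤ d lam)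
    (zdag : X) (C : Fin m → ℝ) (hC : ∀ j, 0 < C j)
    (hslater : ∀ j, C j ≤ g zdag j)
    (lamP : Fin m → ℝ) (hlamP : ∀ j, 0 ≤ lamP j)
    (ε : ℝ) (hε : 0 < ε)
    (lam : Fin m → ℝ) (hlam : ∀ j, 0 ≤ lam j)
    (hD : d lam - d lamP ≤ ε) :
    ∑ j, lam j ≤ (ε + d lamP - f zdag) / (⨅ j, C j) := by
  haveI : Nonempty (Fin m) := ⟨⟨0, hm⟩⟩
  obtain ⟨j0, hj0⟩ := Finite.exists_min C
  have hinf : (⨅ j, C j) = C j0 :=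
    le_antisymm (ciInf_le (Finite.bddBelow_range C) j0) (le_ciInf hj0)
  have hc : 0 < ⨅ j, C j := hinf ▸ hC j0
  rw [le_div_iff₀ hc, hinf]
  have h1 : C j0 * ∑ j, lam j ≤ ∑ j, lam j * g zdag j := by
    rw [Finset.mul_sum]
    apply Finset.sum_le_sum
    intro j _
    calc C j0 * lam j ≤ C j * lam j :=
          mul_le_mul_of_nonneg_right (hj0 j) (hlam j)
      _ ≤ g zdag j * lam j :=
          mul_le_mul_of_nonneg_right (hslater j) (hlam j)
      _ = lam j * g zdag j := mul_comm _ _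
  have h2 := hlb lam hlam zdag
  linarith
end

section
/- Let (x_t)_{t≥0} be a real sequence with |x_t| ≤ B for all t, and suppose liminf_{T→∞} (1/T) Σ_{t=0}^{T−1} x_t ≤ −ε for some ε > 0. Let λ_{k+1} = max(λ_k − (η/T₀) Σ_{t=kT₀}^{(k+1)T₀−1} x_t, 0) with λ_0 ≥ 0, η > 0, T₀ ≥ 1. Then limsup_{k→∞} λ_k = ∞. -/
open Filter Finset

/-- Contradiction step of the feasibility proof: if the time-average `liminf` of
the slack sequence `x_t` is at most `−ε < 0`, then the projected dual multiplier,
updated in epochs of length `T₀`, diverges: `limsup_k λ_k = ∞`. -/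
theorem multiplier_diverges (B ε η : ℝ) (hε : 0 < ε) (hη : 0 < η)
    (T₀ : ℕ) (hT₀ : 1 ≤ T₀)
    (x : ℕ → ℝ) (hxB : ∀ t, |x t| ≤ B)
    (hliminf : Filter.liminf
      (fun T : ℕ => (1 / (T : ℝ)) * ∑ t ∈ Finset.range T, x t) Filter.atTop ≤ -ε)
    (lam : ℕ → ℝ) (hlam0 : 0 ≤ lam 0)
    (hupd : ∀ k, lam (k + 1)
      = max (lam k - (η / T₀) * ∑ t ∈ Finset.Ico (k * T₀) ((k + 1) * T₀), x t) 0) :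
    Filter.limsup (fun k => ((lam k : ℝ) : EReal)) Filter.atTop = ⊤ := by
  have hB0 : 0 ≤ B := le_trans (abs_nonneg _) (hxB 0)
  have hT₀pos : 0 < T₀ := hT₀
  have hT₀R : (0:ℝ) < (T₀ : ℝ) := by exact_mod_cast hT₀pos
  -- sums are bounded
  have hsum_bound : ∀ a b : ℕ, |∑ t ∈ Finset.Ico a b, x t| ≤ ((b - a : ℕ) : ℝ) * B := by
    intro a b
    calc |∑ t ∈ Finset.Ico a b, x t| ≤ ∑ t ∈ Finset.Ico a b, |x t| :=
          Finset.abs_sum_le_sum_abs _ _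
      _ ≤ ∑ _t ∈ Finset.Ico a b, B := Finset.sum_le_sum (fun t _ => hxB t)
      _ = ((b - a : ℕ) : ℝ) * B := by rw [Finset.sum_const, Nat.card_Ico, nsmul_eq_mul]
  -- key induction: lower bound on lam K
  have key : ∀ K, lam 0 - (η / T₀) * ∑ t ∈ Finset.range (K * T₀), x t ≤ lam K := by
    intro K
    induction K with
    | zero => simp
    | succ K ih =>
      have hsplit : ∑ t ∈ Finset.range ((K+1)*T₀), x t
          = ∑ t ∈ Finset.range (K*T₀), x t + ∑ t ∈ Finset.Ico (K*T₀) ((K+1)*T₀), x t := by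
        simp only [Finset.range_eq_Ico]
        exact (Finset.sum_Ico_consecutive _ (Nat.zero_le _)
          (Nat.mul_le_mul_right _ (Nat.le_succ K))).symm
      rw [hupd]
      refine le_trans ?_ (le_max_left _ _)
      rw [hsplit]
      have h2 := sub_le_sub_right ih ((η / T₀) * ∑ t ∈ Finset.Ico (K*T₀) ((K+1)*T₀), x t)
      calc lam 0 - η / ↑T₀ * (∑ t ∈ Finset.range (K*T₀), x t
              + ∑ t ∈ Finset.Ico (K*T₀) ((K+1)*T₀), x t)
          = (lam 0 - η / ↑T₀ * ∑ t ∈ Finset.range (K*T₀), x t)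
              - η / ↑T₀ * ∑ t ∈ Finset.Ico (K*T₀) ((K+1)*T₀), x t := by ring
        _ ≤ lam K - η / ↑T₀ * ∑ t ∈ Finset.Ico (K*T₀) ((K+1)*T₀), x t := h2
  -- frequently, the average is below -ε/2
  have hcobdd : Filter.IsCoboundedUnder (· ≥ ·) Filter.atTop
      (fun T : ℕ => (1 / (T : ℝ)) * ∑ t ∈ Finset.range T, x t) := by
    apply Filter.isCoboundedUnder_ge_of_le Filter.atTop (x := B)
    intro T
    show (1 / (T : ℝ)) * ∑ t ∈ Finset.range T, x t ≤ B
    rcases Nat.eq_zero_or_pos T with h | h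
    · subst h
      rw [Finset.range_zero, Finset.sum_empty, mul_zero]
      exact hB0
    · have hTpos : (0:ℝ) < (T:ℝ) := by exact_mod_cast h
      have hb : |∑ t ∈ Finset.range T, x t| ≤ (T:ℝ) * B := by
        have h0 := hsum_bound 0 T
        rw [Nat.sub_zero] at h0
        rw [Finset.range_eq_Ico]
        exact h0
      have hub : ∑ t ∈ Finset.range T, x t ≤ (T:ℝ) * B := le_of_abs_le hb
      rw [one_div, inv_mul_eq_div, div_le_iff₀ hTpos]
      nlinarith
  have hlt : Filter.liminf
      (fun T : ℕ => (1 / (T : ℝ)) * ∑ t ∈ Finset.range T, x t) Filter.atTop < -ε/2 :=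
    lt_of_le_of_lt hliminf (by linarith)
  have hfreq : ∃ᶠ T : ℕ in Filter.atTop,
      (1 / (T : ℝ)) * ∑ t ∈ Finset.range T, x t < -ε/2 :=
    Filter.frequently_lt_of_liminf_lt hcobdd hlt
  -- conclusion via eq_top_iff_forall_lt
  rw [EReal.eq_top_iff_forall_lt]
  intro M
  refine lt_of_lt_of_le (show (M:EReal) < ((M+1 : ℝ) : EReal) by
    exact_mod_cast (by linarith : M < M + 1)) ?_
  apply Filter.le_limsup_of_frequently_le'
  rw [Filter.frequently_atTop]
  intro N
  -- pick T large with bad average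
  obtain ⟨T, hTlarge, hTavg⟩ := (Filter.frequently_atTop.mp hfreq)
    (max 1 (max (N * T₀) (Nat.ceil ((2 * T₀ / (η * ε)) * (M + 1 + η * B)))))
  have hT1 : 1 ≤ T := le_trans (le_max_left _ _) hTlarge
  have hTpos : (0:ℝ) < (T:ℝ) := by exact_mod_cast hT1
  have hTN : N * T₀ ≤ T := le_trans (le_trans (le_max_left _ _) (le_max_right _ _)) hTlarge
  have hTceil : Nat.ceil ((2 * T₀ / (η * ε)) * (M + 1 + η * B)) ≤ T :=
    le_trans (le_trans (le_max_right _ _) (le_max_right _ _)) hTlarge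
  -- set K = ceil(T / T₀)
  set K := (T + T₀ - 1) / T₀ with hKdef
  have hdm := Nat.div_add_mod (T + T₀ - 1) T₀
  have hmod : (T + T₀ - 1) % T₀ < T₀ := Nat.mod_lt _ hT₀pos
  have hKT : T ≤ K * T₀ := by
    have h1 : T₀ * K + (T + T₀ - 1) % T₀ = T + T₀ - 1 := hdm
    have : T₀ * K = K * T₀ := Nat.mul_comm _ _
    omega
  have hKT2 : K * T₀ ≤ T + T₀ - 1 := by
    have h1 : T₀ * K + (T + T₀ - 1) % T₀ = T + T₀ - 1 := hdm
    have : T₀ * K = K * T₀ := Nat.mul_comm _ _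
    omega
  have hKN : N ≤ K := by
    by_contra h
    push_neg at h
    have : K * T₀ < N * T₀ := (Nat.mul_lt_mul_right hT₀pos).mpr h
    omega
  refine ⟨K, hKN, ?_⟩
  rw [EReal.coe_le_coe_iff]
  -- bound the sum up to K*T₀
  have hsumT : ∑ t ∈ Finset.range T, x t < -ε/2 * T := by
    have := hTavg
    rw [one_div, inv_mul_eq_div, div_lt_iff₀ hTpos] at this
    linarith
  have hsplit2 : ∑ t ∈ Finset.range (K * T₀), x t
      = ∑ t ∈ Finset.range T, x t + ∑ t ∈ Finset.Ico T (K * T₀), x t := by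
    simp only [Finset.range_eq_Ico]
    exact (Finset.sum_Ico_consecutive _ (Nat.zero_le _) hKT).symm
  have htail : ∑ t ∈ Finset.Ico T (K * T₀), x t ≤ (T₀ : ℝ) * B := by
    have h1 : ∑ t ∈ Finset.Ico T (K * T₀), x t ≤ ((K * T₀ - T : ℕ) : ℝ) * B :=
      le_of_abs_le (hsum_bound T (K * T₀))
    have h2 : (K * T₀ - T : ℕ) ≤ T₀ := by omega
    have h3 : ((K * T₀ - T : ℕ) : ℝ) * B ≤ (T₀ : ℝ) * B := by
      apply mul_le_mul_of_nonneg_right _ hB0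
      exact_mod_cast h2
    linarith
  have hsumKT : ∑ t ∈ Finset.range (K * T₀), x t ≤ -ε/2 * T + (T₀ : ℝ) * B := by
    rw [hsplit2]; linarith
  -- now the lower bound on lam K
  have hTbig : (2 * T₀ / (η * ε)) * (M + 1 + η * B) ≤ (T : ℝ) := by
    calc (2 * T₀ / (η * ε)) * (M + 1 + η * B)
        ≤ (Nat.ceil ((2 * T₀ / (η * ε)) * (M + 1 + η * B)) : ℝ) := Nat.le_ceil _
      _ ≤ (T : ℝ) := by exact_mod_cast hTceil
    -- done
  have hηε : 0 < η * ε := mul_pos hη hε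
  have hfinal : M + 1 ≤ lam 0 - (η / T₀) * ∑ t ∈ Finset.range (K * T₀), x t := by
    have h4 : (η / T₀) * (-ε/2 * T + (T₀ : ℝ) * B)
        ≤ (η / T₀) * ∑ t ∈ Finset.range (K * T₀), x t → True := fun _ => trivial
    have h5 : - (η / T₀) * ∑ t ∈ Finset.range (K * T₀), x t
        ≥ - (η / T₀) * (-ε/2 * T + (T₀ : ℝ) * B) := by
      have hpos : 0 < η / T₀ := div_pos hη hT₀R
      nlinarith
    have h6 : - (η / T₀) * (-ε/2 * T + (T₀ : ℝ) * B)
        = (η * ε) / (2 * T₀) * T - η * B := by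
      field_simp
      ring
    have h7 : M + 1 + η * B ≤ (η * ε) / (2 * T₀) * T := by
      rw [div_mul_eq_mul_div, le_div_iff₀ (by positivity)]
      have := mul_le_mul_of_nonneg_left hTbig (le_of_lt hηε)
      calc (M + 1 + η * B) * (2 * T₀)
          = (η * ε) * ((2 * T₀ / (η * ε)) * (M + 1 + η * B)) := by
            field_simp
        _ ≤ (η * ε) * T := this
        _ = η * ε * T := rfl
    nlinarith [hlam0]
  linarith [key K]
end

section
/- Let η > 0, B > 0, and let (x_t)_{t≥0} be a bounded real sequence with |x_t| ≤ B. Let λ_{k+1} = max(λ_k − (η/T₀) Σ_{t=kT₀}^{(k+1)T₀−1} x_t, 0), λ_0 ≥ 0. If the sequence (λ_k) is bounded, i.e. sup_k λ_k ≤ M < ∞, then liminf_{T→∞} (1/T) Σ_{t=0}^{T−1} x_t ≥ 0. -/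
open Filter Finset

/-- Deterministic feasibility: if the projected dual iterates
`λ_{k+1} = max(λ_k − (η/T₀) Σ_{t∈epoch k} x_t, 0)` remain bounded by `M`, then the
long-run time-average of the slack sequence `x_t` is asymptotically nonnegative. -/
theorem bounded_multiplier_feasible (η B M : ℝ) (hη : 0 < η)
    (T₀ : ℕ) (hT₀ : 1 ≤ T₀)
    (x : ℕ → ℝ) (hxB : ∀ t, |x t| ≤ B)
    (lam : ℕ → ℝ) (hlam0 : 0 ≤ lam 0)
    (hupd : ∀ k, lam (k + 1)
      = max (lam k - (η / T₀) * ∑ t ∈ Finset.Ico (k * T₀) ((k + 1) * T₀), x t) 0)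
    (hbdd : ∀ k, lam k ≤ M) :
    0 ≤ Filter.liminf
      (fun T : ℕ => (1 / (T : ℝ)) * ∑ t ∈ Finset.range T, x t) Filter.atTop := by
  have hT₀R : (0:ℝ) < (T₀:ℝ) := by exact_mod_cast hT₀
  have hB : 0 ≤ B := le_trans (abs_nonneg _) (hxB 0)
  have hM : 0 ≤ M := le_trans hlam0 (hbdd 0)
  have hηT : 0 < η / (T₀:ℝ) := div_pos hη hT₀R
  -- key inductive bound
  have key : ∀ k, lam 0 - (η / T₀) * ∑ t ∈ Finset.range (k * T₀), x t ≤ lam k := by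
    intro k
    induction k with
    | zero => simp
    | succ k ih =>
      have hsplit : (∑ t ∈ Finset.range (k * T₀), x t)
          + ∑ t ∈ Finset.Ico (k * T₀) ((k + 1) * T₀), x t
          = ∑ t ∈ Finset.range ((k + 1) * T₀), x t := by
        exact Finset.sum_range_add_sum_Ico x (by nlinarith [hT₀] : k * T₀ ≤ (k+1) * T₀)
      have h1 : lam k - (η / T₀) * ∑ t ∈ Finset.Ico (k * T₀) ((k + 1) * T₀), x t
          ≤ lam (k + 1) := by
        rw [hupd k]; exact le_max_left _ _
      calc lam 0 - (η / T₀) * ∑ t ∈ Finset.range ((k+1) * T₀), x t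
          = (lam 0 - (η / T₀) * ∑ t ∈ Finset.range (k * T₀), x t)
            - (η / T₀) * ∑ t ∈ Finset.Ico (k * T₀) ((k + 1) * T₀), x t := by
            rw [← hsplit]; ring
        _ ≤ lam k - (η / T₀) * ∑ t ∈ Finset.Ico (k * T₀) ((k + 1) * T₀), x t := by
            linarith
        _ ≤ lam (k + 1) := h1
  -- sum over full epochs bounded below
  have epoch : ∀ k, -((T₀:ℝ) / η * M) ≤ ∑ t ∈ Finset.range (k * T₀), x t := by
    intro k
    have h := key k
    have h2 := hbdd k
    have h3 : -M ≤ (η / T₀) * ∑ t ∈ Finset.range (k * T₀), x t := by linarith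
    rw [neg_le]
    have : -(∑ t ∈ Finset.range (k * T₀), x t) ≤ (T₀:ℝ)/η * M := by
      rw [div_mul_eq_mul_div, le_div_iff₀ hη]
      have := mul_le_mul_of_nonneg_left h3 (le_of_lt hT₀R)
      calc -(∑ t ∈ Finset.range (k * T₀), x t) * η
          = -((T₀:ℝ) * ((η / T₀) * ∑ t ∈ Finset.range (k * T₀), x t)) := by
            field_simp
        _ ≤ -((T₀:ℝ) * (-M)) := by
            have := mul_le_mul_of_nonneg_left h3 (le_of_lt hT₀R); linarith
        _ = (T₀:ℝ) * M := by ring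
    linarith
  set C : ℝ := (T₀:ℝ) / η * M + (T₀:ℝ) * B with hC
  have hCpos : 0 ≤ C := by
    have : 0 ≤ (T₀:ℝ) / η * M := mul_nonneg (le_of_lt (div_pos hT₀R hη)) hM
    have : 0 ≤ (T₀:ℝ) * B := mul_nonneg (le_of_lt hT₀R) hB
    positivity
  -- total sum bound for arbitrary T
  have total : ∀ T : ℕ, -C ≤ ∑ t ∈ Finset.range T, x t := by
    intro T
    set k := T / T₀ with hk
    have hkT : k * T₀ ≤ T := Nat.div_mul_le_self T T₀
    have hTk : T - k * T₀ ≤ T₀ := by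
      have h2 : T % T₀ < T₀ := Nat.mod_lt T (by omega)
      have h1 : T / T₀ * T₀ + T % T₀ = T := Nat.div_add_mod' T T₀
      rw [hk]
      generalize T / T₀ * T₀ = m at h1 ⊢
      omega
    have hsplit : (∑ t ∈ Finset.range (k * T₀), x t)
        + ∑ t ∈ Finset.Ico (k * T₀) T, x t = ∑ t ∈ Finset.range T, x t :=
      Finset.sum_range_add_sum_Ico x hkT
    have htail : -((T₀:ℝ) * B) ≤ ∑ t ∈ Finset.Ico (k * T₀) T, x t := by
      have habs : |∑ t ∈ Finset.Ico (k * T₀) T, x t| ≤ (T₀:ℝ) * B := by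
        calc |∑ t ∈ Finset.Ico (k * T₀) T, x t|
            ≤ ∑ t ∈ Finset.Ico (k * T₀) T, |x t| := Finset.abs_sum_le_sum_abs _ _
          _ ≤ ∑ _t ∈ Finset.Ico (k * T₀) T, B := Finset.sum_le_sum (fun t _ => hxB t)
          _ = ((T - k * T₀ : ℕ) : ℝ) * B := by
              rw [Finset.sum_const, Nat.card_Ico]; simp [nsmul_eq_mul]
          _ ≤ (T₀:ℝ) * B := by
              apply mul_le_mul_of_nonneg_right _ hB
              exact_mod_cast hTk
      linarith [neg_abs_le (∑ t ∈ Finset.Ico (k * T₀) T, x t), habs]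
    have := epoch k
    rw [← hsplit, hC]
    linarith
  -- conclude via liminf comparison
  have hlim : Tendsto (fun T : ℕ => -C / (T:ℝ)) atTop (nhds 0) :=
    tendsto_const_div_atTop_nhds_zero_nat (-C)
  have hle : ∀ᶠ T : ℕ in atTop, -C / (T:ℝ)
      ≤ (1 / (T : ℝ)) * ∑ t ∈ Finset.range T, x t := by
    filter_upwards [eventually_ge_atTop 1] with T hT
    have hTpos : (0:ℝ) < (T:ℝ) := by exact_mod_cast hT
    rw [div_le_iff₀ hTpos]
    have : ((1 / (T : ℝ)) * ∑ t ∈ Finset.range T, x t) * T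
        = ∑ t ∈ Finset.range T, x t := by field_simp
    rw [this]
    exact total T
  have hu : IsBoundedUnder (· ≥ ·) atTop (fun T : ℕ => -C / (T:ℝ)) :=
    hlim.isBoundedUnder_ge
  have hvb : IsBoundedUnder (· ≤ ·) atTop
      (fun T : ℕ => (1 / (T : ℝ)) * ∑ t ∈ Finset.range T, x t) := by
    refine ⟨B, ?_⟩
    rw [eventually_map]
    filter_upwards [eventually_ge_atTop 1] with T hT
    have hTpos : (0:ℝ) < (T:ℝ) := by exact_mod_cast hT
    have hsum : ∑ t ∈ Finset.range T, x t ≤ (T:ℝ) * B := by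
      calc ∑ t ∈ Finset.range T, x t ≤ ∑ t ∈ Finset.range T, |x t| :=
            Finset.sum_le_sum (fun t _ => le_abs_self _)
        _ ≤ ∑ _t ∈ Finset.range T, B := Finset.sum_le_sum (fun t _ => hxB t)
        _ = (T:ℝ) * B := by rw [Finset.sum_const, Finset.card_range]; simp [nsmul_eq_mul]
    rw [one_div, ← div_eq_inv_mul, div_le_iff₀ hTpos]
    nlinarith
  have hcob : IsCoboundedUnder (· ≥ ·) atTop
      (fun T : ℕ => (1 / (T : ℝ)) * ∑ t ∈ Finset.range T, x t) :=
    hvb.isCoboundedUnder_ge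
  calc (0:ℝ) = liminf (fun T : ℕ => -C / (T:ℝ)) atTop := (hlim.liminf_eq).symm
    _ ≤ _ := liminf_le_liminf hle hu hcob
end

section
/- Let c : ℕ → ℝ be bounded, b ∈ ℝ, and suppose the projected dual iterates λ_{k+1} = max(λ_k − (η/T₀) Σ_{t=kT₀}^{(k+1)T₀−1} (c(t) − b), 0) satisfy both: (i) (λ_k) is bounded, and (ii) liminf_{K→∞} (1/K) Σ_{k<K} λ_k · g_k ≤ ε where g_k = (1/T₀)Σ_{t=kT₀}^{(k+1)T₀−1}(c(t) − b). If additionally λ_k ≥ λ_min > 0 for all k, then liminf_{K→∞} (1/K) Σ_{k<K} g_k ≤ ε/λ_min; i.e., when multipliers stay bounded away from zero, the average constraint slack is at most ε/λ_min, so the constraint is satisfied nearly with equality. -/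
open Filter Finset

/-!
While the multipliers stay positive the projection never acts, so `η g_k = λ_k - λ_{k+1}`.
Summing, the averaged slack is `(λ_0 - λ_K) / (η K)`, which tends to `0` because `λ` is bounded.
Moreover `2 λ_k (λ_k - λ_{k+1}) ≥ λ_k² - λ_{k+1}²`, so `Σ_{k<K} λ_k g_k` is bounded below by
`-M² / (2η)`: the averaged product has nonnegative liminf, hence `ε ≥ 0`, and
`liminf (average slack) = 0 ≤ ε / λ_min`.
-/

theorem eq_of_eq_max_of_lt {α : Type*} [LinearOrder α] {x y a : α} (h : y = max x a)
    (ha : a < y) : y = x := by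
  rcases le_total x a with hx | hx
  · rw [max_eq_right hx] at h
    exact absurd h ha.ne'
  · rwa [max_eq_left hx] at h

/-- Equals `0` at `K = 0`, since `1 / 0 = 0` in `ℝ`. -/
noncomputable def cesaroMean (u : ℕ → ℝ) (K : ℕ) : ℝ :=
  1 / (K : ℝ) * ∑ k ∈ range K, u k

theorem cesaroMean_le_of_forall_le {u : ℕ → ℝ} {C : ℝ} (hu : ∀ k, u k ≤ C) (hC : 0 ≤ C)
    (K : ℕ) : cesaroMean u K ≤ C := by
  rcases K.eq_zero_or_pos with rfl | hK
  · simpa [cesaroMean] using hC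
  have hsum : ∑ k ∈ range K, u k ≤ K * C := by
    simpa using sum_le_sum fun k (_ : k ∈ range K) => hu k
  rw [cesaroMean, one_div_mul_eq_div, div_le_iff₀ (by positivity)]
  linarith

section SubgradientStep

variable {lam g : ℕ → ℝ} {η C : ℝ}

theorem mul_sum_range_eq_sub_of_step (hstep : ∀ k, lam (k + 1) = lam k - η * g k) (K : ℕ) :
    η * ∑ k ∈ range K, g k = lam 0 - lam K := by
  rw [mul_sum, ← sum_range_sub']
  exact sum_congr rfl fun k _ => by rw [hstep k]; ring

theorem sq_sub_sq_le_two_mul_sum_mul_of_step (hstep : ∀ k, lam (k + 1) = lam k - η * g k)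
    (K : ℕ) : lam 0 ^ 2 - lam K ^ 2 ≤ 2 * η * ∑ k ∈ range K, lam k * g k := by
  rw [← sum_range_sub' (fun k => lam k ^ 2), mul_sum]
  refine sum_le_sum fun k _ => ?_
  rw [hstep k]
  nlinarith [sq_nonneg (η * g k)]

theorem tendsto_cesaroMean_zero_of_step (hstep : ∀ k, lam (k + 1) = lam k - η * g k)
    (hη : η ≠ 0) (hbdd : ∀ k, |lam k| ≤ C) : Tendsto (cesaroMean g) atTop (nhds 0) := by
  refine squeeze_zero_norm (fun K => ?_) (tendsto_const_div_atTop_nhds_zero_nat (2 * C / |η|))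
  have hsum : ∑ k ∈ range K, g k = (lam 0 - lam K) / η := by
    rw [eq_div_iff hη, mul_comm, mul_sum_range_eq_sub_of_step hstep]
  have hdiff : |lam 0 - lam K| ≤ 2 * C := by
    linarith [abs_sub (lam 0) (lam K), hbdd 0, hbdd K]
  rw [cesaroMean, hsum, Real.norm_eq_abs, abs_mul, abs_div, abs_div, abs_one,
    Nat.abs_cast, one_div_mul_eq_div]
  gcongr

theorem zero_le_liminf_cesaroMean_mul_of_step (hstep : ∀ k, lam (k + 1) = lam k - η * g k)
    (hη : 0 < η) (hbdd : ∀ k, |lam k| ≤ C) :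
    0 ≤ liminf (cesaroMean fun k => lam k * g k) atTop := by
  have hlower : ∀ K : ℕ, 1 / (K : ℝ) * (-C ^ 2 / (2 * η)) ≤ cesaroMean (fun k => lam k * g k) K := by
    intro K
    refine mul_le_mul_of_nonneg_left ?_ (by positivity)
    rw [div_le_iff₀' (by positivity)]
    have := sq_sub_sq_le_two_mul_sum_mul_of_step hstep K
    nlinarith [sq_abs (lam K), hbdd K, abs_nonneg (lam K)]
  have hterm : ∀ k, lam k * g k ≤ 2 * C ^ 2 / η := by
    intro k
    have hηg : η * g k = lam k - lam (k + 1) := by rw [hstep k]; ring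
    rw [le_div_iff₀ hη, mul_assoc, mul_comm (g k), hηg]
    have := abs_le.mp (hbdd k)
    have := abs_le.mp (hbdd (k + 1))
    nlinarith [abs_nonneg (lam k)]
  have hlim : Tendsto (fun K : ℕ => 1 / (K : ℝ) * (-C ^ 2 / (2 * η))) atTop (nhds 0) := by
    simpa only [zero_mul] using
      (tendsto_one_div_atTop_nhds_zero_nat (𝕜 := ℝ)).mul_const (-C ^ 2 / (2 * η))
  rw [← hlim.liminf_eq]
  exact liminf_le_liminf (Eventually.of_forall hlower) hlim.isBoundedUnder_ge
    (isCoboundedUnder_ge_of_le atTop (cesaroMean_le_of_forall_le hterm (by positivity)))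

end SubgradientStep

theorem slack_nearly_tight_general (b η ε lamMin M : ℝ) (hη : 0 < η)
    (T₀ : ℕ)
    (c : ℕ → ℝ)
    (lam : ℕ → ℝ)
    (hupd : ∀ k, lam (k + 1)
      = max (lam k - (η / T₀) * ∑ t ∈ Finset.Ico (k * T₀) ((k + 1) * T₀), (c t - b)) 0)
    (hbdd : ∀ k, lam k ≤ M)
    (g : ℕ → ℝ)
    (hg : ∀ k, g k = (1 / (T₀ : ℝ)) * ∑ t ∈ Finset.Ico (k * T₀) ((k + 1) * T₀), (c t - b))
    (hprod : Filter.liminf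
      (fun K : ℕ => (1 / (K : ℝ)) * ∑ k ∈ Finset.range K, lam k * g k)
      Filter.atTop ≤ ε)
    (hmin : 0 < lamMin) (hge : ∀ k, lamMin ≤ lam k) :
    Filter.liminf (fun K : ℕ => (1 / (K : ℝ)) * ∑ k ∈ Finset.range K, g k)
      Filter.atTop ≤ ε / lamMin := by
  have hpos : ∀ k, 0 < lam k := fun k => hmin.trans_le (hge k)
  have habs : ∀ k, |lam k| ≤ M := fun k => abs_le.mpr ⟨by linarith [hpos k, hbdd k], hbdd k⟩
  have hstep : ∀ k, lam (k + 1) = lam k - η * g k := by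
    intro k
    refine eq_of_eq_max_of_lt ?_ (hpos (k + 1))
    rw [hupd k, hg k, div_eq_mul_one_div η, mul_assoc]
  have hε : 0 ≤ ε := (zero_le_liminf_cesaroMean_mul_of_step hstep hη habs).trans hprod
  change liminf (cesaroMean g) atTop ≤ ε / lamMin
  rw [(tendsto_cesaroMean_zero_of_step hstep hη.ne' habs).liminf_eq]
  positivity

/-- Complementary slackness with multipliers bounded away from zero: if the
projected dual iterates are bounded, the Cesàro-average liminf of `λ_k g_k` is at
most `ε`, and `λ_k ≥ λ_min > 0` for all `k`, then the average constraint slack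
satisfies `liminf (1/K) Σ g_k ≤ ε/λ_min`. -/
theorem slack_nearly_tight (B b η ε lamMin M : ℝ) (hη : 0 < η)
    (T₀ : ℕ) (hT₀ : 1 ≤ T₀)
    (c : ℕ → ℝ) (hc : ∀ t, |c t| ≤ B)
    (lam : ℕ → ℝ)
    (hupd : ∀ k, lam (k + 1)
      = max (lam k - (η / T₀) * ∑ t ∈ Finset.Ico (k * T₀) ((k + 1) * T₀), (c t - b)) 0)
    (hbdd : ∀ k, lam k ≤ M)
    (g : ℕ → ℝ)
    (hg : ∀ k, g k = (1 / (T₀ : ℝ)) * ∑ t ∈ Finset.Ico (k * T₀) ((k + 1) * T₀), (c t - b))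
    (hprod : Filter.liminf
      (fun K : ℕ => (1 / (K : ℝ)) * ∑ k ∈ Finset.range K, lam k * g k)
      Filter.atTop ≤ ε)
    (hmin : 0 < lamMin) (hge : ∀ k, lamMin ≤ lam k) :
    Filter.liminf (fun K : ℕ => (1 / (K : ℝ)) * ∑ k ∈ Finset.range K, g k)
      Filter.atTop ≤ ε / lamMin :=
  slack_nearly_tight_general b η ε lamMin M hη T₀ c lam hupd hbdd g hg hprod hmin hge
end
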